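/- Let C > 0 and consider τ₁, τ₂, τ₃ with τ₂ ≥ 0, τ₃ ≥ 0 and the Lipschitz constraints |τ₂ − τ₁| ≤ C and |τ₃ − τ₂| ≤ C. Then (1/2)(τ₂ + τ₃)·clamp((3C − 2τ₁)/(6C), 0, 1) ≤ (1/2)(2τ₁ + 3C)·clamp((3C − 2τ₁)/(6C), 0, 1), and hence the supremum of the left-hand expression over all such (τ₁, τ₂, τ₃) is at most 3C/4. -/
import Mathlib


theorem stmt_19 (C : ℝ) (hC : 0 < C) :
    (∀ τ₁ τ₂ τ₃ : ℝ, 0 ≤ τ₂ → 0 ≤ τ₃ → |τ₂ - τ₁| ≤ C → |τ₃ - τ₂| ≤ C →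
      (1 / 2) * (τ₂ + τ₃) * min (max ((3 * C - 2 * τ₁) / (6 * C)) 0) 1 ≤
        (1 / 2) * (2 * τ₁ + 3 * C) * min (max ((3 * C - 2 * τ₁) / (6 * C)) 0) 1) ∧
    (∀ τ₁ τ₂ τ₃ : ℝ, 0 ≤ τ₂ → 0 ≤ τ₃ → |τ₂ - τ₁| ≤ C → |τ₃ - τ₂| ≤ C →
      (1 / 2) * (τ₂ + τ₃) * min (max ((3 * C - 2 * τ₁) / (6 * C)) 0) 1 ≤ 3 * C / 4) := by
  have hmono : ∀ τ₁ τ₂ τ₃ : ℝ, 0 ≤ τ₂ → 0 ≤ τ₃ → |τ₂ - τ₁| ≤ C → |τ₃ - τ₂| ≤ C →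
      (1 / 2) * (τ₂ + τ₃) * min (max ((3 * C - 2 * τ₁) / (6 * C)) 0) 1 ≤
        (1 / 2) * (2 * τ₁ + 3 * C) * min (max ((3 * C - 2 * τ₁) / (6 * C)) 0) 1 := by
    intro τ₁ τ₂ τ₃ h2 h3 hl1 hl2
    rw [abs_le] at hl1 hl2
    have hc : 0 ≤ min (max ((3 * C - 2 * τ₁) / (6 * C)) 0) 1 :=
      le_min (le_max_right _ _) zero_le_one
    have hs : (1 / 2) * (τ₂ + τ₃) ≤ (1 / 2) * (2 * τ₁ + 3 * C) := by linarith
    exact mul_le_mul_of_nonneg_right hs hc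
  refine ⟨hmono, fun τ₁ τ₂ τ₃ h2 h3 hl1 hl2 => ?_⟩
  refine le_trans (hmono τ₁ τ₂ τ₃ h2 h3 hl1 hl2) ?_
  have h6 : (0:ℝ) < 6 * C := by linarith
  rcases le_or_gt ((3 * C - 2 * τ₁) / (6 * C)) 0 with h | h
  · rw [max_eq_right h]
    have : (3 * C - 2 * τ₁) ≤ 0 := by
      by_contra hcon
      exact absurd (div_pos (by linarith) h6) (not_lt.2 h)
    simp only [min_eq_left (le_of_lt zero_lt_one)]
    nlinarith
  · rw [max_eq_left h.le]
    have ht : 3 * C - 2 * τ₁ > 0 := by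
      by_contra hcon
      exact absurd h (not_lt.2 (div_nonpos_of_nonpos_of_nonneg (by linarith) h6.le))
    rcases le_or_gt ((3 * C - 2 * τ₁) / (6 * C)) 1 with h1 | h1
    · rw [min_eq_left h1]
      rw [div_le_one h6] at h1
      rw [← sub_nonneg]
      have : 3 * C / 4 - (1 / 2) * (2 * τ₁ + 3 * C) * ((3 * C - 2 * τ₁) / (6 * C)) =
          (2 * τ₁)^2 / (12 * C) := by field_simp; ring
      rw [this]
      positivity
    · rw [min_eq_right h1.le]
      rw [lt_div_iff₀ h6] at h1
      nlinarith
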